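/- arXiv:2501.00991 — 3 statements merged into one kernel-verified Lean document; each statement's English description precedes it below -/
import Mathlib

section
/- Let G be a graph and let 𝓜 = (M_1, …, M_ℓ) be a partition of V(G) into modules. Let G/𝓜 be the subgraph of G induced by a set containing exactly one vertex from each M_i. Then tww(G) = max( tww(G/𝓜), max over i ∈ {1,…,ℓ} of tww(G[M_i]) ). -/
open Finset

/-- Two vertex sets are *homogeneous* in `G` if they are complete or anticomplete
to each other. A red edge of a trigraph in a contraction sequence joins two parts
that are not homogeneous. -/
def Homogeneous {V : Type*} (G : SimpleGraph V) (X Y : Finset V) : Prop :=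
  (∀ x ∈ X, ∀ y ∈ Y, G.Adj x y) ∨ (∀ x ∈ X, ∀ y ∈ Y, ¬ G.Adj x y)

/-- A contraction sequence of a graph on vertex type `V` (with `n = Fintype.card V`),
encoded by the partitions of `V` into the parts of the trigraphs `G_n, …, G_1`:
`parts i` is the partition whose blocks are the parts of the vertices of `G_i`.
`G_n` is the discrete partition, and `G_i` is obtained from `G_{i+1}` by merging two parts. -/
structure ContractionSeq (V : Type*) [Fintype V] [DecidableEq V] where
  parts : ℕ → Finpartition (Finset.univ : Finset V)
  parts_card : ∀ i, 1 ≤ i → i ≤ Fintype.card V → (parts i).parts.card = i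
  parts_top : ∀ X ∈ (parts (Fintype.card V)).parts, X.card = 1
  merge : ∀ i, 1 ≤ i → i < Fintype.card V →
    ∃ X ∈ (parts (i + 1)).parts, ∃ Y ∈ (parts (i + 1)).parts, X ≠ Y ∧
      (parts i).parts = insert (X ∪ Y) ((((parts (i + 1)).parts).erase X).erase Y)

/-- Every part of the partition `P` (i.e. every vertex of the corresponding trigraph)
is incident to at most `d` red edges. -/
def RedDegLE {V : Type*} [Fintype V] [DecidableEq V] (G : SimpleGraph V)
    (P : Finpartition (Finset.univ : Finset V)) (d : ℕ) : Prop :=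
  ∀ X ∈ P.parts, {Y | Y ∈ P.parts ∧ Y ≠ X ∧ ¬ Homogeneous G X Y}.ncard ≤ d

/-- `C` is a `d`-sequence of `G`: every trigraph in it has maximum red degree at most `d`. -/
def IsDSeq {V : Type*} [Fintype V] [DecidableEq V] (G : SimpleGraph V)
    (C : ContractionSeq V) (d : ℕ) : Prop :=
  ∀ i, 1 ≤ i → i ≤ Fintype.card V → RedDegLE G (C.parts i) d

/-- The twin-width of `G`: the least `d` such that `G` has a `d`-sequence. -/
noncomputable def tww {V : Type*} [Fintype V] [DecidableEq V] (G : SimpleGraph V) : ℕ :=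
  sInf {d | ∃ C : ContractionSeq V, IsDSeq G C d}

/-- `(σ, τ)` is a realiser of `G` as a permutation graph. -/
def IsRealiser {V : Type*} [Fintype V] (G : SimpleGraph V)
    (σ τ : V ≃ Fin (Fintype.card V)) : Prop :=
  ∀ u v : V, G.Adj u v ↔ ((σ u < σ v ∧ τ v < τ u) ∨ (σ v < σ u ∧ τ u < τ v))

/-- `G` is a permutation graph. -/
def IsPermutationGraph {V : Type*} [Fintype V] (G : SimpleGraph V) : Prop :=
  ∃ σ τ : V ≃ Fin (Fintype.card V), IsRealiser G σ τ

/-- `I` is an interval for the ordering `σ` (its image is a set of consecutive integers,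
equivalently it is convex). -/
def IsIntervalFor {V : Type*} {n : ℕ} (σ : V ≃ Fin n) (I : Set V) : Prop :=
  ∀ u v w : V, u ∈ I → w ∈ I → σ u ≤ σ v → σ v ≤ σ w → v ∈ I

/-- `M` is a module of `G`. -/
def IsModule {V : Type*} (G : SimpleGraph V) (M : Set V) : Prop :=
  ∀ v ∉ M, (∀ m ∈ M, G.Adj v m) ∨ (∀ m ∈ M, ¬ G.Adj v m)

/-- `G` is prime (w.r.t. modules): all its modules are trivial. -/
def IsPrimeGraph {V : Type*} (G : SimpleGraph V) : Prop :=
  ∀ M : Set V, IsModule G M → M.Subsingleton ∨ M = Set.univ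

/-- `M` is a strong module of `G`. -/
def IsStrongModule {V : Type*} (G : SimpleGraph V) (M : Set V) : Prop :=
  IsModule G M ∧ ∀ M' : Set V, IsModule G M' → M ⊆ M' ∨ M' ⊆ M ∨ M ∩ M' = ∅

/-- The underlying graph of the trigraph corresponding to the partition `P` in a
contraction sequence of `G`: parts `X ≠ Y` are adjacent (by a black or red edge)
iff some edge of `G` joins them. -/
def QuotientGraph {V : Type*} [Fintype V] [DecidableEq V] (G : SimpleGraph V)
    (P : Finpartition (Finset.univ : Finset V)) :
    SimpleGraph {X : Finset V // X ∈ P.parts} where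
  Adj X Y := X ≠ Y ∧ ∃ x ∈ X.1, ∃ y ∈ Y.1, G.Adj x y
  symm := by
    refine ⟨?_⟩
    rintro X Y ⟨hne, x, hx, y, hy, hadj⟩
    exact ⟨hne.symm, y, hy, x, hx, hadj.symm⟩
  loopless := by refine ⟨?_⟩; rintro X ⟨hne, -⟩; exact hne rfl

/-- `w` lies strictly between `a` and `b` in the ordering `σ`. -/
def StrictlyBetween {V : Type*} {n : ℕ} (σ : V ≃ Fin n) (a w b : V) : Prop :=
  (σ a < σ w ∧ σ w < σ b) ∨ (σ b < σ w ∧ σ w < σ a)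

/-- `G` is distance-hereditary. -/
def DistanceHereditary {V : Type*} (G : SimpleGraph V) : Prop :=
  ∀ S : Set V, (G.induce S).Connected →
    ∀ u v : S, (G.induce S).dist u v = G.dist ↑u ↑v

/-- There is a path from `a` to `b` in `G` containing no vertex equal or adjacent to `c`. -/
def AvoidingPath {V : Type*} (G : SimpleGraph V) (a b c : V) : Prop :=
  ∃ w : G.Walk a b, w.IsPath ∧ ∀ v ∈ w.support, v ≠ c ∧ ¬ G.Adj c v

/-- `x, y, z` form an asteroidal triple of `G`. -/
def AsteroidalTriple {V : Type*} (G : SimpleGraph V) (x y z : V) : Prop :=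
  x ≠ y ∧ y ≠ z ∧ x ≠ z ∧
    AvoidingPath G x y z ∧ AvoidingPath G y z x ∧ AvoidingPath G x z y

/-- `G` is asteroidal triple-free. -/
def ATFree {V : Type*} (G : SimpleGraph V) : Prop :=
  ∀ x y z : V, ¬ AsteroidalTriple G x y z

/-- `G` is a cograph: it has no induced path on four vertices. -/
def IsCograph {V : Type*} (G : SimpleGraph V) : Prop :=
  IsEmpty (SimpleGraph.pathGraph 4 ↪g G)


/-!
A `d`-sequence is the same as a chain of partitions of `V`, from the discrete partition to one
with at most one part, in which each partition arises from the previous one by merging two parts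
and has red degree at most `d`. Pulling such a chain back along a map `f` with
`H.Adj x y ↔ G.Adj (f x) (f y)` whenever `f x ≠ f y` gives a chain of the same kind; along an
embedding this is `tww G[S] ≤ tww G`, the lower bound.

For the upper bound, first contract each module `M` along a chain for `G[M]`, one module at a time.
Parts lying in different modules are always homogeneous, so every red edge stays inside a module
and the red degree never exceeds `tww G[M]`. The result is the partition `𝓜`, which is the pull-back
of the discrete partition of `R` along the map sending a vertex to the representative of its
module; pulling back a chain for `G[R]` along that map finishes the contraction.
-/

open Relation

theorem Relation.ReflTransGen.pi {ι : Type*} [Fintype ι] [DecidableEq ι] {α : ι → Type*}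
    {r : ∀ i, α i → α i → Prop} {a b : ∀ i, α i} (h : ∀ i, ReflTransGen (r i) (a i) (b i)) :
    ReflTransGen (fun x y => ∃ i, r i (x i) (y i) ∧ y = Function.update x i (y i)) a b := by
  suffices ∀ s : Finset ι, ReflTransGen _ a (s.piecewise b a) by simpa using this univ
  intro s
  induction s using Finset.induction_on with
  | empty => rw [piecewise_empty]
  | insert i s hi ih =>
    rw [piecewise_insert]
    refine ih.trans ?_
    have hstep := ReflTransGen.lift (fun t => Function.update (s.piecewise b a) i t)
      (p := fun x y => ∃ i, r i (x i) (y i) ∧ y = Function.update x i (y i))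
      (fun t t' htt' => ⟨i, by simpa using htt', by simp⟩) _ _ (h i)
    rwa [Function.onFun, ← piecewise_eq_of_notMem s b a hi, Function.update_eq_self] at hstep

theorem Relation.ReflTransGen.subtype {α : Type*} {p : α → Prop} {r : α → α → Prop} {a b : α}
    (h : ReflTransGen (fun x y => r x y ∧ p y) a b) (ha : p a) :
    ∃ hb : p b, ReflTransGen (fun x y : Subtype p => r x y) ⟨a, ha⟩ ⟨b, hb⟩ := by
  induction h with
  | refl => exact ⟨ha, .refl⟩
  | tail _ hbc ih =>
    obtain ⟨_, hpath⟩ := ih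
    exact ⟨hbc.2, ReflTransGen.tail hpath hbc.1⟩

namespace Finpartition

variable {α β : Type*} [DistribLattice α] [OrderBot α] {a : α}

lemma eq_of_map_eq_of_mem_parts [Lattice β] [OrderBot β] (P : Finpartition a) (f : LatticeHom α β)
    (hf : f ⊥ = ⊥) ⦃X Y : α⦄ (hX : X ∈ P.parts) (hY : Y ∈ P.parts) (h : f X = f Y)
    (hne : f X ≠ ⊥) : X = Y := by
  by_contra hXY
  have := (P.pairwiseDisjoint_apply (map_inf f) hf hX hY hXY).eq_bot
  rw [← h, inf_idem] at this
  exact hne this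

section Image

variable [DistribLattice β] [OrderBot β] [DecidableEq β]

def image (P : Finpartition a) (f : LatticeHom α β) (hf : f ⊥ = ⊥) : Finpartition (f a) where
  parts := (P.parts.image f).erase ⊥
  supIndep := by
    rw [supIndep_iff_pairwiseDisjoint]
    intro x hx y hy hxy
    simp only [coe_erase, coe_image, Set.mem_sdiff, Set.mem_image, mem_coe] at hx hy
    obtain ⟨⟨X, hX, rfl⟩, -⟩ := hx
    obtain ⟨⟨Y, hY, rfl⟩, -⟩ := hy
    exact P.pairwiseDisjoint_apply (map_inf f) hf hX hY fun h => hxy (h ▸ rfl)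
  sup_parts := by
    rw [sup_erase_bot, sup_image, Function.id_comp]
    exact P.sup_parts_apply (map_sup f) hf
  bot_notMem := notMem_erase _ _

variable {f : LatticeHom α β} {hf : f ⊥ = ⊥}

lemma image_parts (P : Finpartition a) : (P.image f hf).parts = (P.parts.image f).erase ⊥ :=
  rfl

lemma mem_image_parts {P : Finpartition a} {b : β} :
    b ∈ (P.image f hf).parts ↔ b ≠ ⊥ ∧ ∃ X ∈ P.parts, f X = b := by
  simp [image]

lemma card_image_parts (P : Finpartition a) (hf : f ⊥ = ⊥) (hinj : Function.Injective f) :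
    #(P.image f hf).parts = #P.parts := by
  rw [image_parts, erase_eq_of_notMem, card_image_of_injective _ hinj]
  rw [mem_image]
  rintro ⟨X, hX, h⟩
  exact P.ne_bot hX (hinj (h.trans hf.symm))

end Image

variable [DecidableEq α]

def IsMerge (P Q : Finpartition a) : Prop :=
  ∃ X ∈ P.parts, ∃ Y ∈ P.parts, X ≠ Y ∧ Q.parts = insert (X ⊔ Y) ((P.parts.erase X).erase Y)

lemma IsMerge.card_parts {P Q : Finpartition a} (h : P.IsMerge Q) :
    #Q.parts + 1 = #P.parts := by
  obtain ⟨X, hX, Y, hY, hXY, hQ⟩ := h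
  have hsup : X ⊔ Y ∉ (P.parts.erase X).erase Y := by
    intro hmem
    have hmem' := mem_of_mem_erase (mem_of_mem_erase hmem)
    have := P.disjoint.eq_of_le hX hmem' (P.ne_bot hX) le_sup_left
    exact (mem_erase.1 (mem_of_mem_erase hmem)).1 this.symm
  rw [hQ, card_insert_of_notMem hsup, card_erase_of_mem (mem_erase.2 ⟨hXY.symm, hY⟩),
    card_erase_of_mem hX]
  have : 1 < #P.parts := one_lt_card.2 ⟨X, hX, Y, hY, hXY⟩
  omega

lemma exists_isMerge {P : Finpartition a} (h : 1 < #P.parts) : ∃ Q, P.IsMerge Q := by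
  obtain ⟨X, hX, Y, hY, hXY⟩ := one_lt_card.1 h
  set rest := (P.parts.erase X).erase Y
  have hrest : rest ⊆ P.parts := (erase_subset _ _).trans (erase_subset _ _)
  have hdisj : Disjoint (rest.sup id) (X ⊔ Y) := by
    rw [Finset.disjoint_sup_left]
    intro Z hZ
    obtain ⟨hZY, hZX, hZ⟩ : Z ≠ Y ∧ Z ≠ X ∧ Z ∈ P.parts := by simpa [rest] using hZ
    exact disjoint_sup_right.2 ⟨P.disjoint hZ hX hZX, P.disjoint hZ hY hZY⟩
  have hsup : rest.sup id ⊔ (X ⊔ Y) = a := by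
    rw [← P.sup_parts, ← insert_erase hX, ← insert_erase (mem_erase.2 ⟨hXY.symm, hY⟩),
      sup_insert, sup_insert]
    simp only [id]
    ac_rfl
  exact ⟨(P.ofSubset hrest rfl).extend (ne_bot_of_le_ne_bot (P.ne_bot hX) le_sup_left) hdisj hsup,
    X, hX, Y, hY, hXY, rfl⟩

section MergeImage

variable [DistribLattice β] [OrderBot β] [DecidableEq β] {f : LatticeHom α β} {hf : f ⊥ = ⊥}
  {P Q : Finpartition a} {X Y : α}

lemma image_eq_image_of_map_eq_bot (hX : X ∈ P.parts) (hY : Y ∈ P.parts)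
    (hQ : Q.parts = insert (X ⊔ Y) ((P.parts.erase X).erase Y)) (hbot : f X = ⊥ ∨ f Y = ⊥) :
    P.image f hf = Q.image f hf := by
  ext b
  simp only [mem_image_parts, hQ, mem_insert, mem_erase]
  refine and_congr_right fun hb => ⟨?_, ?_⟩
  · rintro ⟨Z, hZ, rfl⟩
    by_cases hZX : Z = X
    · subst hZX
      refine ⟨Z ⊔ Y, Or.inl rfl, ?_⟩
      rw [map_sup, hbot.resolve_left hb, sup_bot_eq]
    by_cases hZY : Z = Y
    · subst hZY
      refine ⟨X ⊔ Z, Or.inl rfl, ?_⟩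
      rw [map_sup, hbot.resolve_right hb, bot_sup_eq]
    exact ⟨Z, Or.inr ⟨hZY, hZX, hZ⟩, rfl⟩
  · rintro ⟨Z, rfl | ⟨-, -, hZ⟩, rfl⟩
    · rcases hbot with h | h
      · exact ⟨Y, hY, by rw [map_sup, h, bot_sup_eq]⟩
      · exact ⟨X, hX, by rw [map_sup, h, sup_bot_eq]⟩
    · exact ⟨Z, hZ, rfl⟩

lemma isMerge_image_of_map_ne_bot (hX : X ∈ P.parts) (hY : Y ∈ P.parts) (hXY : X ≠ Y)
    (hQ : Q.parts = insert (X ⊔ Y) ((P.parts.erase X).erase Y)) (hXbot : f X ≠ ⊥)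
    (hYbot : f Y ≠ ⊥) : (P.image f hf).IsMerge (Q.image f hf) := by
  have hinj := P.eq_of_map_eq_of_mem_parts f hf
  refine ⟨f X, mem_image_parts.2 ⟨hXbot, X, hX, rfl⟩, f Y, mem_image_parts.2 ⟨hYbot, Y, hY, rfl⟩,
    fun h => hXY (hinj hX hY h hXbot), ?_⟩
  ext b
  simp only [mem_image_parts, hQ, mem_insert, mem_erase]
  constructor
  · rintro ⟨hb, Z, rfl | ⟨hZY, hZX, hZ⟩, rfl⟩
    · exact Or.inl (map_sup f X Y)
    · exact Or.inr ⟨fun h => hZY (hinj hZ hY h hb), fun h => hZX (hinj hZ hX h hb), hb, Z, hZ, rfl⟩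
  · rintro (rfl | ⟨hbY, hbX, hb, Z, hZ, rfl⟩)
    · exact ⟨by simp [hXbot], X ⊔ Y, Or.inl rfl, map_sup f X Y⟩
    · exact ⟨hb, Z, Or.inr ⟨fun h => hbY (h ▸ rfl), fun h => hbX (h ▸ rfl), hZ⟩, rfl⟩

lemma IsMerge.image (h : P.IsMerge Q) :
    P.image f hf = Q.image f hf ∨ (P.image f hf).IsMerge (Q.image f hf) := by
  obtain ⟨X, hX, Y, hY, hXY, hQ⟩ := h
  by_cases hbot : f X = ⊥ ∨ f Y = ⊥
  · exact Or.inl (image_eq_image_of_map_eq_bot hX hY hQ hbot)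
  · push Not at hbot
    exact Or.inr (isMerge_image_of_map_ne_bot hX hY hXY hQ hbot.1 hbot.2)

lemma IsMerge.image_of_injective (hinj : Function.Injective f) (h : P.IsMerge Q) :
    (P.image f hf).IsMerge (Q.image f hf) := by
  refine h.image.resolve_left fun heq => ?_
  have := congrArg (fun R : Finpartition (f a) => #R.parts) heq
  have := h.card_parts
  simp only [card_image_parts _ hf hinj] at *
  omega

end MergeImage

lemma isMerge_bind {P : Finpartition a} {Q Q' : ∀ i ∈ P.parts, Finpartition i} {A : α}
    (hA : A ∈ P.parts) (hmerge : (Q A hA).IsMerge (Q' A hA))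
    (heq : ∀ B (hB : B ∈ P.parts), B ≠ A → Q B hB = Q' B hB) :
    (P.bind Q).IsMerge (P.bind Q') := by
  obtain ⟨X, hX, Y, hY, hXY, hQ'⟩ := hmerge
  have houtside : ∀ B (hB : B ∈ P.parts), B ≠ A → ∀ Z ∈ (Q B hB).parts, Z ≠ X ∧ Z ≠ Y := by
    intro B hB hBA Z hZ
    have hdisj := (P.disjoint hB hA hBA).mono_left ((Q B hB).le hZ)
    exact ⟨(hdisj.mono_right ((Q A hA).le hX)).ne ((Q B hB).ne_bot hZ),
      (hdisj.mono_right ((Q A hA).le hY)).ne ((Q B hB).ne_bot hZ)⟩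
  refine ⟨X, mem_bind.2 ⟨A, hA, hX⟩, Y, mem_bind.2 ⟨A, hA, hY⟩, hXY, ?_⟩
  ext Z
  simp only [mem_bind, mem_insert, mem_erase]
  constructor
  · rintro ⟨B, hB, hZ⟩
    by_cases hBA : B = A
    · subst hBA
      rw [hQ', mem_insert, mem_erase, mem_erase] at hZ
      exact hZ.imp_right fun h => ⟨h.1, h.2.1, B, hB, h.2.2⟩
    · rw [← heq B hB hBA] at hZ
      obtain ⟨hZX, hZY⟩ := houtside B hB hBA Z hZ
      exact Or.inr ⟨hZY, hZX, B, hB, hZ⟩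
  · rintro (rfl | ⟨hZY, hZX, B, hB, hZ⟩)
    · exact ⟨A, hA, by rw [hQ']; exact mem_insert_self _ _⟩
    · refine ⟨B, hB, ?_⟩
      by_cases hBA : B = A
      · subst hBA
        rw [hQ', mem_insert, mem_erase, mem_erase]
        exact Or.inr ⟨hZY, hZX, hZ⟩
      · rwa [← heq B hB hBA]

lemma bind_eq_self {P : Finpartition a} {Q : ∀ i ∈ P.parts, Finpartition i}
    (hQ : ∀ A (hA : A ∈ P.parts), #(Q A hA).parts ≤ 1) : P.bind Q = P := by
  have hsingle : ∀ A (hA : A ∈ P.parts), (Q A hA).parts = {A} := by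
    intro A hA
    obtain ⟨C, hC⟩ := card_eq_one.1 (le_antisymm (hQ A hA)
      (card_pos.2 ((Q A hA).parts_nonempty (P.ne_bot hA))))
    have := (Q A hA).sup_parts
    rw [hC, sup_singleton, id] at this
    rw [hC, this]
  ext B
  simp only [mem_bind, hsingle, mem_singleton]
  exact ⟨fun ⟨A, hA, hB⟩ => hB ▸ hA, fun hB => ⟨B, hB, rfl⟩⟩

end Finpartition

lemma Finpartition.eq_bot_of_forall_card_eq_one {V : Type*} [DecidableEq V] {s : Finset V}
    {P : Finpartition s} (h : ∀ X ∈ P.parts, #X = 1) : P = ⊥ := by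
  ext X
  rw [Finpartition.mem_bot_iff]
  constructor
  · intro hX
    obtain ⟨v, rfl⟩ := card_eq_one.1 (h X hX)
    exact ⟨v, P.le hX (mem_singleton_self v), rfl⟩
  · rintro ⟨v, hv, rfl⟩
    obtain ⟨Y, hY, hvY⟩ := P.exists_mem hv
    obtain ⟨w, rfl⟩ := card_eq_one.1 (h Y hY)
    rwa [mem_singleton.1 hvY]

section Comap

variable {V W : Type*} [Fintype V] [DecidableEq V] [Fintype W] [DecidableEq W]

def Finset.preimageLatticeHom (f : W → V) : LatticeHom (Finset V) (Finset W) where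
  toFun X := {w | f w ∈ X}
  map_sup' X Y := by ext; simp
  map_inf' X Y := by ext; simp

lemma Finset.preimageLatticeHom_bot (f : W → V) : preimageLatticeHom f ⊥ = ⊥ := by
  ext; simp [preimageLatticeHom]

def Finpartition.comap (f : W → V) (Q : Finpartition (univ : Finset V)) :
    Finpartition (univ : Finset W) :=
  (Q.image (preimageLatticeHom f) (preimageLatticeHom_bot f)).copy
    (by ext; simp [preimageLatticeHom])

variable {f : W → V} {Q Q' : Finpartition (univ : Finset V)}

lemma Finpartition.mem_comap_parts {B : Finset W} :
    B ∈ (Q.comap f).parts ↔ B.Nonempty ∧ ∃ X ∈ Q.parts, ({w | f w ∈ X} : Finset W) = B := by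
  rw [comap, copy_parts, mem_image_parts, nonempty_iff_ne_empty]
  rfl

lemma Finpartition.IsMerge.comap (h : Q.IsMerge Q') :
    Q.comap f = Q'.comap f ∨ (Q.comap f).IsMerge (Q'.comap f) := by
  rcases h.image (hf := preimageLatticeHom_bot f) with h | h
  · exact Or.inl (Finpartition.ext (congrArg Finpartition.parts h :))
  · exact Or.inr h

lemma Finpartition.card_comap_parts_le : #(Q.comap f).parts ≤ #Q.parts :=
  card_erase_le.trans card_image_le

lemma Finpartition.comap_bot_of_injective (hf : Function.Injective f) :
    (⊥ : Finpartition (univ : Finset V)).comap f = ⊥ := by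
  refine Finpartition.eq_bot_of_forall_card_eq_one fun B hB => ?_
  obtain ⟨⟨w, hw⟩, X, hX, rfl⟩ := Finpartition.mem_comap_parts.1 hB
  obtain ⟨v, -, rfl⟩ := Finpartition.mem_bot_iff.1 hX
  simp only [mem_filter, mem_univ, mem_singleton, true_and] at hw
  rw [card_eq_one]
  exact ⟨w, by ext; simp [← hw, hf.eq_iff]⟩

end Comap

section OfSubtype

variable {V : Type*} [DecidableEq V]

def Finset.mapLatticeHom {W : Type*} [DecidableEq W] (e : W ↪ V) :
    LatticeHom (Finset W) (Finset V) where
  toFun := Finset.map e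
  map_sup' := map_union
  map_inf' := map_inter

lemma Finset.mapLatticeHom_bot {W : Type*} [DecidableEq W] (e : W ↪ V) : mapLatticeHom e ⊥ = ⊥ :=
  map_empty e

def Finpartition.ofSubtype {M : Finset V} (T : Finpartition (univ : Finset ↥(↑M : Set V))) :
    Finpartition M :=
  (T.image (mapLatticeHom (Function.Embedding.subtype _)) (mapLatticeHom_bot _)).copy (by
    ext v
    simp [mapLatticeHom])

variable {M : Finset V} {T T' : Finpartition (univ : Finset ↥(↑M : Set V))}

lemma Finpartition.mem_ofSubtype_parts {B : Finset V} :
    B ∈ T.ofSubtype.parts ↔ ∃ X ∈ T.parts, X.map (Function.Embedding.subtype _) = B := by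
  rw [ofSubtype, copy_parts, mem_image_parts]
  refine ⟨fun h => h.2, fun ⟨X, hX, hXB⟩ => ⟨?_, X, hX, hXB⟩⟩
  rw [← hXB]
  exact (map_nonempty.2 (T.nonempty_of_mem_parts hX)).ne_empty

lemma Finpartition.card_ofSubtype_parts : #T.ofSubtype.parts = #T.parts :=
  card_image_parts _ (mapLatticeHom_bot _) (map_injective _)

lemma Finpartition.IsMerge.ofSubtype (h : T.IsMerge T') : T.ofSubtype.IsMerge T'.ofSubtype :=
  h.image_of_injective (hf := mapLatticeHom_bot _) (map_injective _)

end OfSubtype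

section Homogeneous

variable {V W : Type*} {G : SimpleGraph V} {H : SimpleGraph W}

lemma Homogeneous.comap [Fintype W] [DecidableEq V] {f : W → V}
    (hf : ∀ x y, f x ≠ f y → (H.Adj x y ↔ G.Adj (f x) (f y)))
    {X Y : Finset V} (hXY : Disjoint X Y) (h : Homogeneous G X Y) :
    Homogeneous H {w | f w ∈ X} {w | f w ∈ Y} := by
  have hne : ∀ x ∈ ({w | f w ∈ X} : Finset W), ∀ y ∈ ({w | f w ∈ Y} : Finset W), f x ≠ f y := by
    intro x hx y hy hxy
    simp only [mem_filter, mem_univ, true_and] at hx hy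
    exact disjoint_left.1 hXY hx (hxy ▸ hy)
  refine h.imp (fun h x hx y hy => ?_) (fun h x hx y hy => ?_) <;>
    rw [hf x y (hne x hx y hy)] <;> simp only [mem_filter, mem_univ, true_and] at hx hy
  exacts [h _ hx _ hy, h _ hx _ hy]

lemma Homogeneous.map_subtype {S : Finset V} {X Y : Finset ↥(↑S : Set V)}
    (h : Homogeneous (G.induce (↑S : Set V)) X Y) :
    Homogeneous G (X.map (Function.Embedding.subtype _))
      (Y.map (Function.Embedding.subtype _)) := by
  simp only [Homogeneous, mem_map, Function.Embedding.coe_subtype, forall_exists_index, and_imp,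
    forall_apply_eq_imp_iff₂]
  exact h

end Homogeneous

section RedDegree

variable {V W : Type*} [Fintype V] [DecidableEq V] {G : SimpleGraph V} {H : SimpleGraph W}
  {d : ℕ}

lemma RedDegLE.mono {P : Finpartition (univ : Finset V)} {d' : ℕ} (h : RedDegLE G P d)
    (hd : d ≤ d') : RedDegLE G P d' :=
  fun X hX => (h X hX).trans hd

lemma redDegLE_bot : RedDegLE G ⊥ d := by
  intro X hX
  obtain ⟨x, -, rfl⟩ := Finpartition.mem_bot_iff.1 hX
  convert Nat.zero_le d
  rw [Set.ncard_eq_zero]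
  ext Y
  simp only [Set.mem_ofPred_eq, Set.mem_empty_iff_false, iff_false, not_and, not_not]
  intro hY _
  obtain ⟨y, -, rfl⟩ := Finpartition.mem_bot_iff.1 hY
  by_cases hxy : G.Adj x y
  · exact Or.inl (by simpa using hxy)
  · exact Or.inr (by simpa using hxy)

lemma redDegLE_card (P : Finpartition (univ : Finset V)) : RedDegLE G P (Fintype.card V) := by
  intro X _
  calc _ ≤ (P.parts : Set (Finset V)).ncard := Set.ncard_le_ncard fun Y hY => hY.1
    _ = #P.parts := Set.ncard_coe_finset _
    _ ≤ Fintype.card V := P.card_parts_le_card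

lemma RedDegLE.comap [Fintype W] [DecidableEq W] {f : W → V}
    (hf : ∀ x y, f x ≠ f y → (H.Adj x y ↔ G.Adj (f x) (f y)))
    {Q : Finpartition (univ : Finset V)} (h : RedDegLE G Q d) : RedDegLE H (Q.comap f) d := by
  intro B hB
  obtain ⟨-, X, hX, rfl⟩ := Finpartition.mem_comap_parts.1 hB
  let pre : Finset V → Finset W := fun Y => {w | f w ∈ Y}
  calc _ ≤ (pre '' {Y | Y ∈ Q.parts ∧ Y ≠ X ∧ ¬Homogeneous G X Y}).ncard := by
        refine Set.ncard_le_ncard ?_ (Set.toFinite _)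
        rintro C ⟨hC, hCX, hhom⟩
        obtain ⟨-, Y, hY, rfl⟩ := Finpartition.mem_comap_parts.1 hC
        have hYX : Y ≠ X := fun h => hCX (h ▸ rfl)
        exact ⟨Y, ⟨hY, hYX, fun h => hhom (h.comap hf (Q.disjoint hX hY hYX.symm))⟩, rfl⟩
    _ ≤ _ := Set.ncard_image_le (Set.toFinite _)
    _ ≤ d := h X hX

end RedDegree

section Contractible

variable {V W : Type*} [Fintype V] [DecidableEq V] [Fintype W] [DecidableEq W]
  {G : SimpleGraph V} {H : SimpleGraph W} {d : ℕ}

def RedMerge (G : SimpleGraph V) (d : ℕ) (P Q : Finpartition (univ : Finset V)) : Prop :=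
  P.IsMerge Q ∧ RedDegLE G Q d

/-- A `d`-sequence as a chain of merges (`contractible_iff_exists_isDSeq`); the bound is `≤ 1`
rather than `= 1` so that the empty graph is included. -/
def Contractible (G : SimpleGraph V) (d : ℕ) : Prop :=
  ∃ Q, ReflTransGen (RedMerge G d) ⊥ Q ∧ #Q.parts ≤ 1

lemma Contractible.mono {d' : ℕ} (h : Contractible G d) (hd : d ≤ d') : Contractible G d' := by
  obtain ⟨Q, hQ, hcard⟩ := h
  exact ⟨Q, ReflTransGen.mono (fun _ _ h => ⟨h.1, h.2.mono hd⟩) _ _ hQ, hcard⟩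

lemma contractible_card : Contractible G (Fintype.card V) := by
  suffices ∀ n (P : Finpartition (univ : Finset V)), #P.parts = n →
      ∃ Q, ReflTransGen (RedMerge G (Fintype.card V)) P Q ∧ #Q.parts ≤ 1 from this _ ⊥ rfl
  intro n
  induction n using Nat.strong_induction_on with
  | _ n ih =>
    intro P hP
    by_cases h : #P.parts ≤ 1
    · exact ⟨P, .refl, h⟩
    obtain ⟨P', hP'⟩ := Finpartition.exists_isMerge (not_le.1 h)
    obtain ⟨Q, hQ, hcard⟩ := ih _ (hP ▸ by have := hP'.card_parts; omega) P' rfl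
    exact ⟨Q, .head ⟨hP', redDegLE_card P'⟩ hQ, hcard⟩

lemma contractible_of_isDSeq {C : ContractionSeq V} (hC : IsDSeq G C d) : Contractible G d := by
  set n := Fintype.card V
  rcases Nat.eq_zero_or_pos n with hn | hn
  · refine ⟨⊥, .refl, ?_⟩
    rw [Finpartition.card_bot, card_univ]
    omega
  have hpath : ∀ k < n, ReflTransGen (RedMerge G d) ⊥ (C.parts (n - k)) := by
    intro k
    induction k with
    | zero =>
      intro _
      rw [Nat.sub_zero, Finpartition.eq_bot_of_forall_card_eq_one C.parts_top]
    | succ k ih =>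
      intro hk
      obtain ⟨X, hX, Y, hY, hXY, hmerge⟩ := C.merge (n - (k + 1)) (by omega) (by omega)
      rw [show n - (k + 1) + 1 = n - k by omega] at hX hY hmerge
      exact (ih (by omega)).tail ⟨⟨X, hX, Y, hY, hXY, hmerge⟩, hC _ (by omega) (by omega)⟩
  refine ⟨C.parts 1, ?_, (C.parts_card 1 le_rfl hn).le⟩
  simpa [show n - (n - 1) = 1 by omega] using hpath (n - 1) (by omega)

lemma exists_partial_contractionSeq {P : Finpartition (univ : Finset V)}
    (h : ReflTransGen (RedMerge G d) ⊥ P) :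
    ∃ s : ℕ → Finpartition (univ : Finset V), s (Fintype.card V) = ⊥ ∧ s #P.parts = P ∧
      ∀ i, #P.parts ≤ i → i ≤ Fintype.card V → #(s i).parts = i ∧ RedDegLE G (s i) d ∧
        (i < Fintype.card V → (s (i + 1)).IsMerge (s i)) := by
  induction h with
  | refl =>
    have hbot : #(⊥ : Finpartition (univ : Finset V)).parts = Fintype.card V := by
      rw [Finpartition.card_bot, card_univ]
    refine ⟨fun _ => ⊥, rfl, rfl, fun i hi hin => ?_⟩
    rw [hbot] at hi
    exact ⟨by rw [hbot]; omega, redDegLE_bot, by omega⟩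
  | @tail P Q _ hPQ ih =>
    obtain ⟨s, hs_top, hs_P, hs⟩ := ih
    have hcard := hPQ.1.card_parts
    have hPn : #P.parts ≤ Fintype.card V := P.card_parts_le_card.trans_eq card_univ
    refine ⟨Function.update s #Q.parts Q, ?_, by simp, fun i hi hin => ?_⟩
    · rw [Function.update_of_ne (by omega), hs_top]
    rcases hi.eq_or_lt with rfl | hi
    · rw [Function.update_self, hcard, Function.update_of_ne (by omega), hs_P]
      exact ⟨rfl, hPQ.2, fun _ => hPQ.1⟩
    · rw [Function.update_of_ne hi.ne', Function.update_of_ne (by omega)]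
      exact hs i (by omega) hin

lemma exists_isDSeq_of_contractible (h : Contractible G d) :
    ∃ C : ContractionSeq V, IsDSeq G C d := by
  obtain ⟨Q, hQ, hcard⟩ := h
  obtain ⟨s, hs_top, -, hs⟩ := exists_partial_contractionSeq hQ
  refine ⟨⟨s, fun i h1 hi => (hs i (by omega) hi).1, ?_, fun i h1 hi => ?_⟩,
    fun i h1 hi => (hs i (by omega) hi).2.1⟩
  · intro X hX
    rw [hs_top] at hX
    obtain ⟨x, -, rfl⟩ := Finpartition.mem_bot_iff.1 hX
    exact card_singleton x
  · exact (hs i (by omega) hi.le).2.2 hi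

lemma contractible_iff_exists_isDSeq :
    Contractible G d ↔ ∃ C : ContractionSeq V, IsDSeq G C d :=
  ⟨exists_isDSeq_of_contractible, fun ⟨_, hC⟩ => contractible_of_isDSeq hC⟩

lemma tww_le_iff_contractible : tww G ≤ d ↔ Contractible G d := by
  have hne : {d | ∃ C : ContractionSeq V, IsDSeq G C d}.Nonempty :=
    ⟨_, contractible_iff_exists_isDSeq.1 contractible_card⟩
  rw [contractible_iff_exists_isDSeq]
  refine ⟨fun h => ?_, fun h => Nat.sInf_le h⟩
  exact contractible_iff_exists_isDSeq.1
    ((contractible_iff_exists_isDSeq.2 (Nat.sInf_mem hne)).mono h)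

theorem reflTransGen_redMerge_comap {f : W → V}
    (hf : ∀ x y, f x ≠ f y → (H.Adj x y ↔ G.Adj (f x) (f y))) {P Q : Finpartition (univ : Finset V)}
    (h : ReflTransGen (RedMerge G d) P Q) :
    ReflTransGen (RedMerge H d) (P.comap f) (Q.comap f) := by
  refine ReflTransGen.lift' _ (fun P Q hPQ => ?_) _ _ h
  rcases hPQ.1.comap (f := f) with heq | hmerge
  · exact (congrArg (ReflTransGen (RedMerge H d) (P.comap f)) heq).mp .refl
  · exact .single ⟨hmerge, hPQ.2.comap hf⟩

theorem tww_le_of_embedding (e : H ↪g G) : tww H ≤ tww G := by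
  obtain ⟨Q, hQ, hcard⟩ := tww_le_iff_contractible.1 (le_refl (tww G))
  refine tww_le_iff_contractible.2 ⟨Q.comap e, ?_, Finpartition.card_comap_parts_le.trans hcard⟩
  rw [← Finpartition.comap_bot_of_injective e.injective]
  exact reflTransGen_redMerge_comap (fun x y _ => e.map_adj_iff.symm) hQ

end Contractible

section ModularPartition

variable {V : Type*} [Fintype V] [DecidableEq V] {G : SimpleGraph V}
  {P : Finpartition (univ : Finset V)} {D : ℕ}

lemma adj_of_adj_of_mem_parts (hmod : ∀ M ∈ P.parts, IsModule G (↑M : Set V)) {M N : Finset V}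
    (hM : M ∈ P.parts) (hN : N ∈ P.parts) (hMN : M ≠ N) {x x' y y' : V} (hx : x ∈ M)
    (hx' : x' ∈ M) (hy : y ∈ N) (hy' : y' ∈ N) (h : G.Adj x y) : G.Adj x' y' := by
  have hdisj := P.disjoint hM hN hMN
  have hyM : y ∉ (↑M : Set V) := fun hyM => disjoint_left.1 hdisj hyM hy
  have hx'N : x' ∉ (↑N : Set V) := fun hx'N => disjoint_left.1 hdisj hx' hx'N
  rcases hmod M hM y hyM with hall | hnone
  · rcases hmod N hN x' hx'N with hall' | hnone'
    · exact hall' y' hy'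
    · exact absurd (hall x' hx').symm (hnone' y hy)
  · exact absurd h.symm (hnone x hx)

lemma homogeneous_of_subset_of_subset (hmod : ∀ M ∈ P.parts, IsModule G (↑M : Set V))
    {M N : Finset V} (hM : M ∈ P.parts) (hN : N ∈ P.parts) (hMN : M ≠ N) {X Y : Finset V}
    (hX : X ⊆ M) (hY : Y ⊆ N) : Homogeneous G X Y := by
  by_cases h : ∃ x ∈ X, ∃ y ∈ Y, G.Adj x y
  · obtain ⟨x, hx, y, hy, hxy⟩ := h
    exact Or.inl fun x' hx' y' hy' =>
      adj_of_adj_of_mem_parts hmod hM hN hMN (hX hx) (hX hx') (hY hy) (hY hy') hxy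
  · push Not at h
    exact Or.inr h

def Finpartition.bindSubtype (P : Finpartition (univ : Finset V))
    (x : ∀ i : P.parts, Finpartition (univ : Finset ↥(↑(i : Finset V) : Set V))) :
    Finpartition (univ : Finset V) :=
  P.bind fun M hM => (x ⟨M, hM⟩).ofSubtype

lemma Finpartition.bindSubtype_bot : P.bindSubtype (fun _ => ⊥) = ⊥ := by
  refine Finpartition.eq_bot_of_forall_card_eq_one fun B hB => ?_
  obtain ⟨M, hM, hB⟩ := Finpartition.mem_bind.1 hB
  obtain ⟨X, hX, rfl⟩ := Finpartition.mem_ofSubtype_parts.1 hB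
  obtain ⟨v, -, rfl⟩ := Finpartition.mem_bot_iff.1 hX
  simp

lemma Finpartition.bindSubtype_eq_self
    {x : ∀ i : P.parts, Finpartition (univ : Finset ↥(↑(i : Finset V) : Set V))}
    (hx : ∀ i : P.parts, #(x i).parts ≤ 1) : P.bindSubtype x = P :=
  Finpartition.bind_eq_self fun M hM => Finpartition.card_ofSubtype_parts.trans_le (hx ⟨M, hM⟩)

lemma redDegLE_bindSubtype (hmod : ∀ M ∈ P.parts, IsModule G (↑M : Set V))
    {x : ∀ i : P.parts, Finpartition (univ : Finset ↥(↑(i : Finset V) : Set V))}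
    (hx : ∀ i : P.parts, RedDegLE (G.induce (↑(i : Finset V) : Set V)) (x i) D) :
    RedDegLE G (P.bindSubtype x) D := by
  intro B hB
  obtain ⟨M, hM, hBM⟩ := Finpartition.mem_bind.1 hB
  obtain ⟨X, hX, rfl⟩ := Finpartition.mem_ofSubtype_parts.1 hBM
  let emb : Finset ↥(↑M : Set V) → Finset V := fun Y => Y.map (Function.Embedding.subtype _)
  calc _ ≤ (emb '' {Y | Y ∈ (x ⟨M, hM⟩).parts ∧ Y ≠ X ∧
        ¬Homogeneous (G.induce (↑M : Set V)) X Y}).ncard := by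
        refine Set.ncard_le_ncard ?_ (Set.toFinite _)
        rintro C ⟨hC, hCX, hhom⟩
        obtain ⟨N, hN, hCN⟩ := Finpartition.mem_bind.1 hC
        by_cases hNM : N = M
        · subst hNM
          obtain ⟨Y, hY, rfl⟩ := Finpartition.mem_ofSubtype_parts.1 hCN
          exact ⟨Y, ⟨hY, fun h => hCX (h ▸ rfl), fun h => hhom h.map_subtype⟩, rfl⟩
        · exact absurd (homogeneous_of_subset_of_subset hmod hM hN (Ne.symm hNM)
            ((x ⟨M, hM⟩).ofSubtype.le hBM) ((x ⟨N, hN⟩).ofSubtype.le hCN)) hhom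
    _ ≤ _ := Set.ncard_image_le (Set.toFinite _)
    _ ≤ D := hx ⟨M, hM⟩ X hX

/-- The modules are contracted one at a time, each along its own sequence. -/
theorem reflTransGen_bot_of_isModule (hmod : ∀ M ∈ P.parts, IsModule G (↑M : Set V))
    (hP : ∀ M ∈ P.parts, Contractible (G.induce (↑M : Set V)) D) :
    ReflTransGen (RedMerge G D) ⊥ P := by
  choose Q hQ hcard using fun i : P.parts => hP i.1 i.2
  choose hgood hpath using fun i : P.parts => (hQ i).subtype redDegLE_bot
  have hglued := ReflTransGen.lift (p := RedMerge G D) (fun x => P.bindSubtype fun i => (x i).1)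
    ?_ _ _ (ReflTransGen.pi hpath)
  · rwa [Function.onFun, Finpartition.bindSubtype_bot, Finpartition.bindSubtype_eq_self hcard]
      at hglued
  rintro x y ⟨i, hxy, hy⟩
  refine ⟨Finpartition.isMerge_bind i.2 hxy.ofSubtype fun B hB hBi => ?_,
    redDegLE_bindSubtype hmod fun j => (y j).2⟩
  have hyx : y ⟨B, hB⟩ = x ⟨B, hB⟩ := by
    rw [hy, Function.update_of_ne (fun h => hBi (congrArg Subtype.val h))]
  exact congrArg (fun T => Finpartition.ofSubtype (Subtype.val T)) hyx.symm

end ModularPartition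
section Transversal

variable {V : Type*} [Fintype V] [DecidableEq V] {G : SimpleGraph V}
  {P : Finpartition (univ : Finset V)} {R : Finset V}

lemma exists_mem_transversal (hR : ∀ M ∈ P.parts, #(R ∩ M) = 1) (v : V) :
    ∃ r ∈ R, r ∈ P.part v := by
  obtain ⟨r, hr⟩ := card_pos.1 ((hR _ (P.part_mem.2 (mem_univ v))).symm ▸ Nat.one_pos)
  exact ⟨r, mem_inter.1 hr⟩

noncomputable def transversalRep (hR : ∀ M ∈ P.parts, #(R ∩ M) = 1) (v : V) : ↥(↑R : Set V) :=
  ⟨(exists_mem_transversal hR v).choose, (exists_mem_transversal hR v).choose_spec.1⟩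

variable (hR : ∀ M ∈ P.parts, #(R ∩ M) = 1)

lemma transversalRep_eq_iff {v : V} {r : ↥(↑R : Set V)} :
    transversalRep hR v = r ↔ ↑r ∈ P.part v := by
  have hrep := (exists_mem_transversal hR v).choose_spec
  refine ⟨fun h => h ▸ hrep.2, fun hr => Subtype.ext ?_⟩
  exact card_le_one.1 (hR _ (P.part_mem.2 (mem_univ v))).le _ (mem_inter.2 hrep)
    _ (mem_inter.2 ⟨r.2, hr⟩)

lemma transversalRep_mem_part (v : V) : ↑(transversalRep hR v) ∈ P.part v :=
  (transversalRep_eq_iff hR).1 rfl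

lemma transversalRep_eq_iff_part_eq {v w : V} :
    transversalRep hR v = transversalRep hR w ↔ P.part v = P.part w := by
  rw [transversalRep_eq_iff, P.mem_part_iff_part_eq_part (mem_univ _) (mem_univ _),
    (P.mem_part_iff_part_eq_part (mem_univ _) (mem_univ _)).1 (transversalRep_mem_part hR w),
    eq_comm]

lemma adj_iff_adj_transversalRep (hmod : ∀ M ∈ P.parts, IsModule G (↑M : Set V)) {x y : V}
    (hxy : transversalRep hR x ≠ transversalRep hR y) :
    G.Adj x y ↔ (G.induce (↑R : Set V)).Adj (transversalRep hR x) (transversalRep hR y) := by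
  have hne : P.part x ≠ P.part y := fun h => hxy ((transversalRep_eq_iff_part_eq hR).2 h)
  have hx := P.part_mem.2 (mem_univ x)
  have hy := P.part_mem.2 (mem_univ y)
  have hxx := P.mem_part (mem_univ x)
  have hyy := P.mem_part (mem_univ y)
  exact ⟨adj_of_adj_of_mem_parts hmod hx hy hne hxx (transversalRep_mem_part hR x) hyy
      (transversalRep_mem_part hR y),
    adj_of_adj_of_mem_parts hmod hx hy hne (transversalRep_mem_part hR x) hxx
      (transversalRep_mem_part hR y) hyy⟩

lemma comap_transversalRep_bot :
    (⊥ : Finpartition (univ : Finset ↥(↑R : Set V))).comap (transversalRep hR) = P := by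
  have hfiber : ∀ r : ↥(↑R : Set V), ({v | transversalRep hR v ∈ ({r} : Finset _)} : Finset V)
      = P.part r := by
    intro r
    ext v
    simp only [mem_filter, mem_univ, true_and, mem_singleton, transversalRep_eq_iff]
    rw [P.mem_part_iff_part_eq_part (mem_univ _) (mem_univ _),
      P.mem_part_iff_part_eq_part (mem_univ _) (mem_univ _), eq_comm]
  ext B
  rw [Finpartition.mem_comap_parts]
  constructor
  · rintro ⟨-, X, hX, rfl⟩
    obtain ⟨r, -, rfl⟩ := Finpartition.mem_bot_iff.1 hX
    rw [hfiber]
    exact P.part_mem.2 (mem_univ _)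
  · intro hB
    obtain ⟨v, hv⟩ := P.nonempty_of_mem_parts hB
    refine ⟨⟨v, hv⟩, {transversalRep hR v}, Finpartition.mem_bot_iff.2 ⟨_, mem_univ _, rfl⟩, ?_⟩
    rw [hfiber, ← P.part_eq_of_mem hB hv]
    exact P.part_eq_of_mem (P.part_mem.2 (mem_univ _)) (transversalRep_mem_part hR v)

end Transversal

theorem exists_reflTransGen_of_transversal {V : Type*} [Fintype V] [DecidableEq V]
    {G : SimpleGraph V} {P : Finpartition (univ : Finset V)} {R : Finset V} {D : ℕ}
    (hmod : ∀ M ∈ P.parts, IsModule G (↑M : Set V)) (hR : ∀ M ∈ P.parts, #(R ∩ M) = 1)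
    (hC : Contractible (G.induce (↑R : Set V)) D) :
    ∃ Q, ReflTransGen (RedMerge G D) P Q ∧ #Q.parts ≤ 1 := by
  obtain ⟨Q, hQ, hcard⟩ := hC
  refine ⟨Q.comap (transversalRep hR), ?_, Finpartition.card_comap_parts_le.trans hcard⟩
  have hlift :=
    reflTransGen_redMerge_comap (fun x y hxy => adj_iff_adj_transversalRep hR hmod hxy) hQ
  rwa [comap_transversalRep_bot hR] at hlift

theorem tww_induce_le {V : Type*} [Fintype V] [DecidableEq V] (G : SimpleGraph V) (S : Finset V) :
    tww (G.induce (↑S : Set V)) ≤ tww G :=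
  tww_le_of_embedding (SimpleGraph.Embedding.induce _)

/-- For a modular partition `𝓜 = (M_1, …, M_ℓ)` of `G` and a transversal
`R` (one vertex from each part), `tww(G) = max(tww(G/𝓜), max_i tww(G[M_i]))`, where
`G/𝓜 = G[R]`. -/
theorem stmt_12 {V : Type*} [Fintype V] [DecidableEq V] (G : SimpleGraph V)
    (P : Finpartition (Finset.univ : Finset V))
    (hmod : ∀ M ∈ P.parts, IsModule G (↑M : Set V))
    (R : Finset V) (hR : ∀ M ∈ P.parts, (R ∩ M).card = 1) :
    tww G =
      max (tww (G.induce (↑R : Set V)))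
        (P.parts.sup fun M => tww (G.induce (↑M : Set V))) := by
  set D := max (tww (G.induce (↑R : Set V))) (P.parts.sup fun M => tww (G.induce (↑M : Set V)))
  apply le_antisymm
  · have hquot : Contractible (G.induce (↑R : Set V)) D :=
      tww_le_iff_contractible.1 (le_max_left _ _)
    have hmodules (M : Finset V) (hM : M ∈ P.parts) : Contractible (G.induce (↑M : Set V)) D :=
      tww_le_iff_contractible.1
        ((Finset.le_sup (f := fun M : Finset V => tww (G.induce (↑M : Set V))) hM).trans
          (le_max_right _ _))
    obtain ⟨Q, hPQ, hQ⟩ := exists_reflTransGen_of_transversal hmod hR hquot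
    exact tww_le_iff_contractible.2
      ⟨Q, (reflTransGen_bot_of_isModule hmod hmodules).trans hPQ, hQ⟩
  · exact max_le (tww_induce_le G R) (Finset.sup_le fun M _ => tww_induce_le G M)
end

section
/- Let G be a permutation graph on n vertices and let M ⊆ V(G) be a strong module of G. Then for every realiser (σ, τ) of G, the set M is a common interval of (σ, τ), i.e., both σ(M) and τ(M) are sets of consecutive integers. -/
open Finset

/-!
Suppose `σ u < σ v < σ w` with `u, w ∈ M` and `v ∉ M`. Passing to the complement, which is
realised by `σ` and the reverse of `τ` and has the same strong modules, we may assume that `v`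
is anticomplete to `M`. Non-adjacent vertices are ordered alike by `σ` and `τ`, so every vertex
outside `M` lying in the same `σ`-gap of `M` as `v` is anticomplete to `M` too. The vertices of
`M` before `v` together with this gap then form a module containing `u` and `v` but not `w`,
which overlaps `M`.
-/

namespace IsRealiser

variable {V : Type*} [Fintype V] {G : SimpleGraph V} {σ τ : V ≃ Fin (Fintype.card V)}
  {a b c : V}

theorem symm (h : IsRealiser G σ τ) : IsRealiser G τ σ := fun a b => by
  rw [h a b]
  tauto

theorem snd_lt_of_adj (h : IsRealiser G σ τ) (hab : G.Adj a b) (hσ : σ a < σ b) :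
    τ b < τ a :=
  ((h a b).1 hab).elim And.right fun h' => absurd hσ h'.1.asymm

theorem snd_lt_of_not_adj (h : IsRealiser G σ τ) (hab : ¬G.Adj a b) (hσ : σ a < σ b) :
    τ a < τ b := by
  have hne : τ a ≠ τ b := fun e => hσ.ne (congrArg σ (τ.injective e))
  exact hne.lt_or_gt.resolve_right fun hτ => hab ((h a b).2 (Or.inl ⟨hσ, hτ⟩))

theorem adj_of_lt_of_lt (h : IsRealiser G σ τ) (hσ : σ a < σ b) (hτ : τ b < τ a) :
    G.Adj a b :=
  (h a b).2 (Or.inl ⟨hσ, hτ⟩)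

theorem not_adj_of_lt_of_lt (h : IsRealiser G σ τ) (hσ : σ a < σ b) (hτ : τ a < τ b) :
    ¬G.Adj a b := fun hab =>
  (h.snd_lt_of_adj hab hσ).asymm hτ

theorem not_adj_trans (h : IsRealiser G σ τ) (hab : ¬G.Adj a b) (hbc : ¬G.Adj b c)
    (h₁ : σ a < σ b) (h₂ : σ b < σ c) : ¬G.Adj a c :=
  h.not_adj_of_lt_of_lt (h₁.trans h₂)
    ((h.snd_lt_of_not_adj hab h₁).trans (h.snd_lt_of_not_adj hbc h₂))

theorem compl (h : IsRealiser G σ τ) : IsRealiser Gᶜ σ (τ.trans Fin.revPerm) := by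
  intro a b
  simp only [SimpleGraph.compl_adj, Equiv.trans_apply, Fin.revPerm_apply, Fin.rev_lt_rev]
  constructor
  · rintro ⟨hne, hab⟩
    rcases (σ.injective.ne hne).lt_or_gt with hσ | hσ
    · exact Or.inl ⟨hσ, h.snd_lt_of_not_adj hab hσ⟩
    · exact Or.inr ⟨hσ, h.snd_lt_of_not_adj (fun hba => hab hba.symm) hσ⟩
  · rintro (⟨hσ, hτ⟩ | ⟨hσ, hτ⟩)
    · exact ⟨fun e => hσ.ne (congrArg σ e), h.not_adj_of_lt_of_lt hσ hτ⟩
    · exact ⟨fun e => hσ.ne' (congrArg σ e),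
        fun hab => h.not_adj_of_lt_of_lt hσ hτ hab.symm⟩

end IsRealiser

section Complement

variable {V : Type*} {G : SimpleGraph V} {M : Set V}

theorem IsModule.compl (h : IsModule G M) : IsModule Gᶜ M := by
  intro v hv
  rcases h v hv with hadj | hnadj
  · exact Or.inr fun m hm hvm => hvm.2 (hadj m hm)
  · exact Or.inl fun m hm => ⟨fun e => hv (e ▸ hm), hnadj m hm⟩

theorem IsStrongModule.compl (h : IsStrongModule G M) : IsStrongModule Gᶜ M :=
  ⟨h.1.compl, fun M' hM' => h.2 M' (compl_compl G ▸ hM'.compl)⟩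

end Complement

section Gap

variable {V : Type*} [Fintype V] {G : SimpleGraph V} {σ τ : V ≃ Fin (Fintype.card V)}
  {M : Set V} {c m m₀ u v w x : V}

def gap {n : ℕ} (σ : V ≃ Fin n) (M : Set V) (v : V) : Set V :=
  {x | x ∉ M ∧ ∀ m ∈ M, ¬StrictlyBetween σ v m x}

theorem ne_of_mem_gap (hc : c ∈ gap σ M v) (hm : m ∈ M) : σ c ≠ σ m :=
  σ.injective.ne fun e : c = m => hc.1 (e ▸ hm)

theorem self_mem_gap (hv : v ∉ M) : v ∈ gap σ M v :=
  ⟨hv, fun _ _ h => h.elim (fun h => h.1.asymm h.2) fun h => h.1.asymm h.2⟩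

theorem lt_of_mem_gap (hc : c ∈ gap σ M v) (hm : m ∈ M) (hmv : σ m < σ v) : σ m < σ c :=
  (ne_of_mem_gap hc hm).lt_or_gt.resolve_left fun hcm => hc.2 m hm (Or.inr ⟨hcm, hmv⟩)

theorem gt_of_mem_gap (hc : c ∈ gap σ M v) (hm : m ∈ M) (hvm : σ v < σ m) : σ c < σ m :=
  (ne_of_mem_gap hc hm).lt_or_gt.resolve_right fun hmc => hc.2 m hm (Or.inl ⟨hvm, hmc⟩)

theorem forall_not_adj_of_mem_gap (hreal : IsRealiser G σ τ) (hM : IsModule G M)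
    (hvM : ∀ m ∈ M, ¬G.Adj v m) (hu : u ∈ M) (hw : w ∈ M) (huv : σ u < σ v)
    (hvw : σ v < σ w) (hc : c ∈ gap σ M v) : ∀ m ∈ M, ¬G.Adj c m := by
  refine (hM c hc.1).resolve_left fun hcM => ?_
  have hτuw : τ u < τ w := (hreal.snd_lt_of_not_adj (fun h => hvM u hu h.symm) huv).trans
    (hreal.snd_lt_of_not_adj (hvM w hw) hvw)
  have hτwu : τ w < τ u := (hreal.snd_lt_of_adj (hcM w hw) (gt_of_mem_gap hc hw hvw)).trans
    (hreal.snd_lt_of_adj (hcM u hu).symm (lt_of_mem_gap hc hu huv))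
  exact hτuw.asymm hτwu

theorem adj_of_mem_gap (hreal : IsRealiser G σ τ) (hu : u ∈ M) (hw : w ∈ M)
    (huv : σ u < σ v) (hvw : σ v < σ w) (hc : c ∈ gap σ M v) (hcM : ∀ m ∈ M, ¬G.Adj c m)
    (hxM : ∀ m ∈ M, G.Adj x m) (hm₀ : m₀ ∈ M) (hsep : StrictlyBetween σ v m₀ x) :
    G.Adj x c := by
  rcases hsep with ⟨hvm₀, hm₀x⟩ | ⟨hxm₀, hm₀v⟩
  · have hτ : τ x < τ c :=
      (hreal.snd_lt_of_adj (hxM u hu).symm (huv.trans (hvm₀.trans hm₀x))).trans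
        (hreal.snd_lt_of_not_adj (fun h => hcM u hu h.symm) (lt_of_mem_gap hc hu huv))
    exact (hreal.adj_of_lt_of_lt ((gt_of_mem_gap hc hm₀ hvm₀).trans hm₀x) hτ).symm
  · have hτ : τ c < τ x := (hreal.snd_lt_of_not_adj (hcM w hw) (gt_of_mem_gap hc hw hvw)).trans
      (hreal.snd_lt_of_adj (hxM w hw) (hxm₀.trans (hm₀v.trans hvw)))
    exact hreal.adj_of_lt_of_lt (hxm₀.trans (lt_of_mem_gap hc hm₀ hm₀v)) hτ

theorem not_adj_of_mem_gap (hreal : IsRealiser G σ τ) (hc : c ∈ gap σ M v)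
    (hcM : ∀ m ∈ M, ¬G.Adj c m) (hxM : ∀ m ∈ M, ¬G.Adj x m) (hm₀ : m₀ ∈ M)
    (hsep : StrictlyBetween σ v m₀ x) : ¬G.Adj x c := by
  rcases hsep with ⟨hvm₀, hm₀x⟩ | ⟨hxm₀, hm₀v⟩
  · exact fun h => hreal.not_adj_trans (hcM m₀ hm₀) (fun h' => hxM m₀ hm₀ h'.symm)
      (gt_of_mem_gap hc hm₀ hvm₀) hm₀x h.symm
  · exact hreal.not_adj_trans (hxM m₀ hm₀) (fun h' => hcM m₀ hm₀ h'.symm) hxm₀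
      (lt_of_mem_gap hc hm₀ hm₀v)

theorem isModule_lower_union_gap (hreal : IsRealiser G σ τ) (hM : IsModule G M) (hv : v ∉ M)
    (hvM : ∀ m ∈ M, ¬G.Adj v m) (hu : u ∈ M) (hw : w ∈ M) (huv : σ u < σ v)
    (hvw : σ v < σ w) : IsModule G ({m ∈ M | σ m < σ v} ∪ gap σ M v) := by
  have hgap c (hc : c ∈ gap σ M v) := forall_not_adj_of_mem_gap hreal hM hvM hu hw huv hvw hc
  intro x hx
  simp only [Set.mem_union, Set.mem_sep_iff, not_or, not_and] at hx
  by_cases hxM : x ∈ M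
  · have hvx : σ v < σ x := (σ.injective.ne fun e : v = x => hv (e ▸ hxM)).lt_of_le
      (not_lt.1 (hx.1 hxM))
    refine Or.inr ?_
    rintro c (⟨hcM, hcv⟩ | hc)
    · exact fun h =>
        hreal.not_adj_trans (fun h' => hvM c hcM h'.symm) (hvM x hxM) hcv hvx h.symm
    · exact fun h => hgap c hc x hxM h.symm
  · obtain ⟨m₀, hm₀, hsep⟩ : ∃ m₀ ∈ M, StrictlyBetween σ v m₀ x := by
      simpa [gap, hxM] using hx.2
    rcases hM x hxM with hxM' | hxM'
    · refine Or.inl ?_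
      rintro c (⟨hcM, -⟩ | hc)
      · exact hxM' c hcM
      · exact adj_of_mem_gap hreal hu hw huv hvw hc (hgap c hc) hxM' hm₀ hsep
    · refine Or.inr ?_
      rintro c (⟨hcM, -⟩ | hc)
      · exact hxM' c hcM
      · exact not_adj_of_mem_gap hreal hc (hgap c hc) hxM' hm₀ hsep

theorem IsStrongModule.exists_adj_of_lt_of_lt (hreal : IsRealiser G σ τ)
    (hM : IsStrongModule G M) (hv : v ∉ M) (hu : u ∈ M) (hw : w ∈ M) (huv : σ u < σ v)
    (hvw : σ v < σ w) : ∃ m ∈ M, G.Adj v m := by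
  by_contra! hvM
  rcases hM.2 _ (isModule_lower_union_gap hreal hM.1 hv hvM hu hw huv hvw) with h | h | h
  · rcases h hw with ⟨-, hwv⟩ | hwgap
    · exact hvw.asymm hwv
    · exact hwgap.1 hw
  · exact hv (h (Or.inr (self_mem_gap hv)))
  · exact h.subset ⟨hu, Or.inl ⟨hu, huv⟩⟩

theorem IsStrongModule.isIntervalFor (hreal : IsRealiser G σ τ) (hM : IsStrongModule G M) :
    IsIntervalFor σ M := by
  intro u v w hu hw huv hvw
  by_contra hv
  have huv : σ u < σ v := huv.lt_of_ne (σ.injective.ne fun e : u = v => hv (e ▸ hu))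
  have hvw : σ v < σ w := hvw.lt_of_ne (σ.injective.ne fun e : v = w => hv (e ▸ hw))
  rcases hM.1 v hv with hvM | hvM
  · obtain ⟨m, hm, hvm⟩ := hM.compl.exists_adj_of_lt_of_lt hreal.compl hv hu hw huv hvw
    exact hvm.2 (hvM m hm)
  · obtain ⟨m, hm, hvm⟩ := hM.exists_adj_of_lt_of_lt hreal hv hu hw huv hvw
    exact hvM m hm hvm

end Gap

theorem stmt_14_general {V : Type*} [Fintype V] (G : SimpleGraph V)
    (M : Set V) (hM : IsStrongModule G M)
    (σ τ : V ≃ Fin (Fintype.card V)) (hreal : IsRealiser G σ τ) :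
    IsIntervalFor σ M ∧ IsIntervalFor τ M :=
  ⟨hM.isIntervalFor hreal, hM.isIntervalFor hreal.symm⟩

/-- If `M` is a strong module of a permutation graph `G`, then `M` is a
common interval of every realiser of `G`. -/
theorem stmt_14 {V : Type*} [Fintype V] (G : SimpleGraph V)
    (hperm : IsPermutationGraph G) (M : Set V) (hM : IsStrongModule G M)
    (σ τ : V ≃ Fin (Fintype.card V)) (hreal : IsRealiser G σ τ) :
    IsIntervalFor σ M ∧ IsIntervalFor τ M :=
  stmt_14_general G M hM σ τ hreal
end

section
/- If G is a bipartite graph and G_n, …, G_1 is a 1-contraction sequence of G, then the underlying graph of every trigraph G_i is bipartite. -/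
open Finset

/-!
Fix a proper 2-colouring `c` of `G`. A part on which `c` is constant inherits its colour, and
an edge of the trigraph between two such parts comes from an edge of `G`, so these colours
agree with `c`. A part on which `c` takes both values cannot be complete to a nonempty part
(its vertices would all avoid one colour), so every edge of the trigraph at it is red, and red
degree at most one leaves it at most one neighbour. Vertices of degree at most one are then
coloured greedily.
-/

namespace SimpleGraph

variable {W : Type*} (H : SimpleGraph W)

theorem colorable_two_of_coloring_off_subsingleton_neighborSet (S : Set W) (g : W → Fin 2)
    (hg : ∀ ⦃X Y⦄, X ∈ S → Y ∈ S → H.Adj X Y → g X ≠ g Y)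
    (hS : ∀ X ∉ S, (H.neighborSet X).Subsingleton) : H.Colorable 2 := by
  classical
  let : LinearOrder W := linearOrderOfSTO WellOrderingRel
  -- the order only serves to separate the two ends of an edge lying outside `S`
  let f : W → Fin 2 := fun X =>
    if X ∈ S then g X
    else if h : ∃ Y, H.Adj X Y then
      if h.choose ∈ S then g h.choose + 1 else if X < h.choose then 0 else 1
    else 0
  have hf : ∀ ⦃X Y⦄, X ∉ S → H.Adj X Y →
      f X = if Y ∈ S then g Y + 1 else if X < Y then 0 else 1 := by
    intro X Y hX hXY
    have h : ∃ Y, H.Adj X Y := ⟨Y, hXY⟩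
    have hY : h.choose = Y := hS X hX h.choose_spec hXY
    simp only [f, if_neg hX, dif_pos h, hY]
  have hsucc : ∀ a : Fin 2, a + 1 ≠ a := by decide
  refine ⟨Coloring.mk f fun {X Y} hXY => ?_⟩
  by_cases hX : X ∈ S <;> by_cases hY : Y ∈ S
  · simpa only [f, if_pos hX, if_pos hY] using hg hX hY hXY
  · rw [hf hY hXY.symm, if_pos hX]
    simp only [f, if_pos hX]
    exact (hsucc (g X)).symm
  · rw [hf hX hXY, if_pos hY]
    simp only [f, if_pos hY]
    exact hsucc (g Y)
  · rw [hf hX hXY, hf hY hXY.symm, if_neg hX, if_neg hY]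
    rcases lt_trichotomy X Y with h | rfl | h
    · simp [h, h.not_gt]
    · exact (hXY.ne rfl).elim
    · simp [h, h.not_gt]

end SimpleGraph

section Quotient

variable {V : Type*} {G : SimpleGraph V}

theorem not_homogeneous_of_adj (c : G.Coloring (Fin 2)) {X Y : Finset V}
    (hX : ¬ (c '' X).Subsingleton) {x y : V} (hx : x ∈ X) (hy : y ∈ Y) (hxy : G.Adj x y) :
    ¬ Homogeneous G X Y := by
  have hfin2 : ∀ a b d : Fin 2, a ≠ d → b ≠ d → a = b := by decide
  rintro (hcomplete | hanticomplete)
  · refine hX ?_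
    rintro _ ⟨x₁, hx₁, rfl⟩ _ ⟨x₂, hx₂, rfl⟩
    exact hfin2 _ _ (c y) (c.valid (hcomplete x₁ hx₁ y hy)) (c.valid (hcomplete x₂ hx₂ y hy))
  · exact hanticomplete x hx y hy hxy

variable [Fintype V] [DecidableEq V] {P : Finpartition (univ : Finset V)}

theorem RedDegLE.nonHomogeneous_subsingleton (hP : RedDegLE G P 1) {X : Finset V}
    (hX : X ∈ P.parts) : {Y | Y ∈ P.parts ∧ Y ≠ X ∧ ¬ Homogeneous G X Y}.Subsingleton :=
  Set.ncard_le_one_iff_subsingleton.mp (hP X hX)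

theorem QuotientGraph.neighborSet_subsingleton (c : G.Coloring (Fin 2)) (hP : RedDegLE G P 1)
    (X : {X // X ∈ P.parts}) (hX : ¬ (c '' X.1).Subsingleton) :
    ((QuotientGraph G P).neighborSet X).Subsingleton := by
  refine ((hP.nonHomogeneous_subsingleton X.2).preimage Subtype.val_injective).anti ?_
  rintro Y ⟨hne, x, hx, y, hy, hxy⟩
  exact ⟨Y.2, fun h => hne (Subtype.ext h.symm), not_homogeneous_of_adj c hX hx hy hxy⟩

theorem QuotientGraph.colorable_two (hG : G.Colorable 2) (hP : RedDegLE G P 1) :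
    (QuotientGraph G P).Colorable 2 := by
  obtain ⟨c⟩ := hG
  let rep : {X // X ∈ P.parts} → V := fun X => (P.nonempty_of_mem_parts X.2).choose
  have hrep : ∀ X, rep X ∈ X.1 := fun X => (P.nonempty_of_mem_parts X.2).choose_spec
  refine (QuotientGraph G P).colorable_two_of_coloring_off_subsingleton_neighborSet
    {X | (c '' X.1).Subsingleton} (fun X => c (rep X)) ?_
    (QuotientGraph.neighborSet_subsingleton c hP)
  rintro X Y hX hY ⟨-, x, hx, y, hy, hxy⟩
  rw [hX (Set.mem_image_of_mem c (hrep X)) (Set.mem_image_of_mem c hx),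
    hY (Set.mem_image_of_mem c (hrep Y)) (Set.mem_image_of_mem c hy)]
  exact c.valid hxy

end Quotient

/-- If `G` is bipartite and `G_n, …, G_1` is a 1-contraction sequence of
`G`, then the underlying graph of every trigraph `G_i` is bipartite. -/
theorem stmt_15 {V : Type*} [Fintype V] [DecidableEq V] (G : SimpleGraph V)
    (hbip : G.Colorable 2)
    (C : ContractionSeq V) (hC : IsDSeq G C 1)
    (i : ℕ) (h1 : 1 ≤ i) (hn : i ≤ Fintype.card V) :
    (QuotientGraph G (C.parts i)).Colorable 2 :=
  QuotientGraph.colorable_two hbip (hC i h1 hn)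
end
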